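/- arXiv:1508.00690 — 2 statements merged into one kernel-verified Lean document; each statement's English description precedes it below -/
import Mathlib

section
/- Let F be a field, B ≤ M(n,F), A = B ⊗ M(d,F) the d-th blow-up, and A ∈ A. Consider the second Wong sequence W₀ = 0, W_i = A(A^{-1}(W_{i-1})). Then each W_i is invariant under all I_n ⊗ Y for Y ∈ M(d,F); hence each W_i has the form W_i = V_i ⊗ F^d for some V_i ≤ F^n, and in particular dim(W_i) is divisible by d for every i. -/
open Matrix Module Kronecker

/-- The second Wong sequence of `(A, 𝓐)` for matrices indexed by `ι`. -/
def wongSeq {F ι : Type*} [Field F] [Fintype ι] [DecidableEq ι]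
    (𝓐 : Submodule F (Matrix ι ι F)) (A : Matrix ι ι F) :
    ℕ → Submodule F (ι → F)
  | 0 => ⊥
  | i + 1 => Submodule.span F
      {w : ι → F | ∃ B ∈ 𝓐, ∃ v : ι → F,
        A.mulVec v ∈ wongSeq 𝓐 A i ∧ w = B.mulVec v}

/-!
Left multiplication by `1 ⊗ Y` maps the blow-up `𝓐 = 𝓑 ⊗ M(d,F)` into itself, so it maps each
generator `B v` of `W_{i+1}` (with `B ∈ 𝓐`, `A v ∈ W_i`) to the generator `((1 ⊗ Y) B) v`. A subspace
of `F^n ⊗ F^d` invariant under all `1 ⊗ Y` is `V ⊗ F^d`, with `V` the set of `u` such that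
`u ⊗ e_j` lies in it for all `j`, and `V ⊗ F^d ≅ V^d` has dimension `d · dim V`.
-/

section

variable {F ι κ : Type*} [Field F]

theorem mulVec_mem_wongSeq [Fintype ι] [DecidableEq ι]
    {𝓐 : Submodule F (Matrix ι ι F)} {A M : Matrix ι ι F} (hM : ∀ B ∈ 𝓐, M * B ∈ 𝓐) :
    ∀ i, ∀ v ∈ wongSeq 𝓐 A i, M *ᵥ v ∈ wongSeq 𝓐 A i
  | 0, v, hv => by
    rw [wongSeq, Submodule.mem_bot] at hv ⊢
    rw [hv, mulVec_zero]
  | i + 1, v, hv => by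
    rw [wongSeq] at hv ⊢
    refine (Submodule.span_le (p := (Submodule.span F _).comap M.mulVecLin)).2 ?_ hv
    rintro _ ⟨B, hB, u, hu, rfl⟩
    exact Submodule.subset_span ⟨M * B, hM B hB, u, hu, mulVec_mulVec ..⟩

theorem one_kronecker_mul_mem_span_kronecker [Fintype ι] [Fintype κ]
    [DecidableEq ι] (𝓑 : Submodule F (Matrix ι ι F)) (Y : Matrix κ κ F)
    {M : Matrix (ι × κ) (ι × κ) F}
    (hM : M ∈ Submodule.span F {M | ∃ B ∈ 𝓑, ∃ C : Matrix κ κ F, M = B ⊗ₖ C}) :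
    (1 ⊗ₖ Y) * M ∈ Submodule.span F {M | ∃ B ∈ 𝓑, ∃ C : Matrix κ κ F, M = B ⊗ₖ C} := by
  refine (Submodule.span_le
    (p := (Submodule.span F _).comap (LinearMap.mulLeft F (1 ⊗ₖ Y)))).2 ?_ hM
  rintro _ ⟨B, hB, C, rfl⟩
  exact Submodule.subset_span ⟨B, hB, Y * C, by
    rw [LinearMap.mulLeft_apply, ← mul_kronecker_mul, Matrix.one_mul]⟩

/-- The subspace `V ⊗ F^κ` of `F^(ι × κ)`. -/
def Submodule.blowUp (V : Submodule F (ι → F)) (κ : Type*) : Submodule F (ι × κ → F) :=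
  ⨅ k : κ, V.comap (LinearMap.funLeft F F (·, k))

theorem Submodule.mem_blowUp {V : Submodule F (ι → F)} {w : ι × κ → F} :
    w ∈ V.blowUp κ ↔ ∀ k, (fun i => w (i, k)) ∈ V := by
  simp only [blowUp, mem_iInf, mem_comap]
  rfl

def Submodule.blowUpEquiv (V : Submodule F (ι → F)) : V.blowUp κ ≃ₗ[F] (κ → V) where
  toFun w k := ⟨fun i => w.1 (i, k), mem_blowUp.1 w.2 k⟩
  invFun f := ⟨fun p => (f p.2).1 p.1, mem_blowUp.2 fun k => (f k).2⟩
  map_add' _ _ := rfl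
  map_smul' _ _ := rfl
  left_inv _ := rfl
  right_inv _ := rfl

theorem Submodule.finrank_blowUp [Fintype ι] [Fintype κ] (V : Submodule F (ι → F)) :
    finrank F (V.blowUp κ) = Fintype.card κ * finrank F V := by
  rw [V.blowUpEquiv.finrank_eq, finrank_pi_fintype, Finset.sum_const, Finset.card_univ,
    smul_eq_mul]

variable [DecidableEq κ]

def tmulSingle (j : κ) : (ι → F) →ₗ[F] ι × κ → F where
  toFun u p := u p.1 * (Pi.single j 1 : κ → F) p.2
  map_add' _ _ := funext fun _ => add_mul ..
  map_smul' c u := funext fun p => mul_assoc c (u p.1) _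

theorem sum_tmulSingle [Fintype κ] (w : ι × κ → F) :
    ∑ j, tmulSingle j (fun i => w (i, j)) = w := by
  ext ⟨i, k⟩
  simp [tmulSingle, Pi.single_apply]

theorem one_kronecker_single_mulVec [Fintype ι] [DecidableEq ι] [Fintype κ] (j k : κ)
    (w : ι × κ → F) :
    (1 ⊗ₖ single j k 1) *ᵥ w = tmulSingle j (fun i => w (i, k)) := by
  ext ⟨i, l⟩
  simp [tmulSingle, mulVec, dotProduct, Fintype.sum_prod_type, one_apply, single_apply,
    Pi.single_apply, ite_and, eq_comm]

theorem Submodule.blowUp_eq_span [Fintype κ] (V : Submodule F (ι → F)) :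
    V.blowUp κ = span F {v | ∃ u ∈ V, ∃ e : κ → F, v = fun p => u p.1 * e p.2} := by
  apply le_antisymm
  · intro w hw
    rw [← sum_tmulSingle w]
    exact sum_mem fun j _ => subset_span ⟨_, mem_blowUp.1 hw j, Pi.single j 1, rfl⟩
  · rw [span_le]
    rintro _ ⟨u, hu, e, rfl⟩
    refine mem_blowUp.2 fun k => ?_
    rw [show (fun i => u i * e k) = e k • u from funext fun _ => mul_comm _ _]
    exact V.smul_mem _ hu

/-- The matrix units `1 ⊗ Eⱼₖ` move the `k`-th slice of a vector of `W` to the `j`-th one. -/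
theorem exists_eq_blowUp_of_one_kronecker_mulVec_mem [Fintype ι] [DecidableEq ι] [Fintype κ]
    {W : Submodule F (ι × κ → F)} (hW : ∀ Y : Matrix κ κ F, ∀ v ∈ W, (1 ⊗ₖ Y) *ᵥ v ∈ W) :
    ∃ V : Submodule F (ι → F), W = V.blowUp κ := by
  refine ⟨⨅ j, W.comap (tmulSingle j), le_antisymm (fun w hw => ?_) (fun w hw => ?_)⟩
  · refine Submodule.mem_blowUp.2 fun k => Submodule.mem_iInf _ |>.2 fun j => ?_
    rw [Submodule.mem_comap, ← one_kronecker_single_mulVec]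
    exact hW _ w hw
  · rw [← sum_tmulSingle w]
    exact sum_mem fun j _ => (Submodule.mem_iInf _).1 (Submodule.mem_blowUp.1 hw j) j

end

theorem stmt16_general {F : Type*} [Field F] {n d : ℕ}
    (𝓑 : Submodule F (Matrix (Fin n) (Fin n) F))
    (𝓐 : Submodule F (Matrix (Fin n × Fin d) (Fin n × Fin d) F))
    (h𝓐 : 𝓐 = Submodule.span F
      {M : Matrix (Fin n × Fin d) (Fin n × Fin d) F |
        ∃ B ∈ 𝓑, ∃ C : Matrix (Fin d) (Fin d) F, M = B ⊗ₖ C})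
    (A : Matrix (Fin n × Fin d) (Fin n × Fin d) F) :
    ∀ i : ℕ,
      (∀ Y : Matrix (Fin d) (Fin d) F, ∀ v ∈ wongSeq 𝓐 A i,
        ((1 : Matrix (Fin n) (Fin n) F) ⊗ₖ Y).mulVec v ∈ wongSeq 𝓐 A i) ∧
      (∃ V : Submodule F (Fin n → F),
        wongSeq 𝓐 A i = Submodule.span F
          {v : Fin n × Fin d → F | ∃ u ∈ V, ∃ e : Fin d → F, v = fun p => u p.1 * e p.2}) ∧
      d ∣ finrank F (wongSeq 𝓐 A i) := by
  intro i
  subst h𝓐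
  have hinv : ∀ Y : Matrix (Fin d) (Fin d) F, ∀ v ∈ wongSeq _ A i,
      ((1 : Matrix (Fin n) (Fin n) F) ⊗ₖ Y) *ᵥ v ∈ wongSeq _ A i := fun Y =>
    mulVec_mem_wongSeq (fun _ => one_kronecker_mul_mem_span_kronecker 𝓑 Y) i
  obtain ⟨V, hV⟩ := exists_eq_blowUp_of_one_kronecker_mulVec_mem hinv
  refine ⟨hinv, ⟨V, hV.trans V.blowUp_eq_span⟩, ?_⟩
  rw [hV, V.finrank_blowUp, Fintype.card_fin]
  exact dvd_mul_right d _

/-- For a blow-up `𝓐 = 𝓑 ⊗ M(d,F)` and `A ∈ 𝓐`, every term `W_i` of the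
second Wong sequence is invariant under all `I ⊗ Y`, is of the form
`V_i ⊗ F^d`, and has dimension divisible by `d`. -/
theorem stmt16 {F : Type*} [Field F] {n d : ℕ} (hd : 0 < d)
    (𝓑 : Submodule F (Matrix (Fin n) (Fin n) F))
    (𝓐 : Submodule F (Matrix (Fin n × Fin d) (Fin n × Fin d) F))
    (h𝓐 : 𝓐 = Submodule.span F
      {M : Matrix (Fin n × Fin d) (Fin n × Fin d) F |
        ∃ B ∈ 𝓑, ∃ C : Matrix (Fin d) (Fin d) F, M = B ⊗ₖ C})
    (A : Matrix (Fin n × Fin d) (Fin n × Fin d) F) (hA : A ∈ 𝓐) :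
    ∀ i : ℕ,
      (∀ Y : Matrix (Fin d) (Fin d) F, ∀ v ∈ wongSeq 𝓐 A i,
        ((1 : Matrix (Fin n) (Fin n) F) ⊗ₖ Y).mulVec v ∈ wongSeq 𝓐 A i) ∧
      (∃ V : Submodule F (Fin n → F),
        wongSeq 𝓐 A i = Submodule.span F
          {v : Fin n × Fin d → F | ∃ u ∈ V, ∃ e : Fin d → F, v = fun p => u p.1 * e p.2}) ∧
      d ∣ finrank F (wongSeq 𝓐 A i) :=
  stmt16_general 𝓑 𝓐 h𝓐 A
end

section
/- Let F be a field, B ≤ M(n,F), A = B ⊗ M(d,F), and A ∈ A with rk(A) = rd. Then the second Wong sequence of (A, A) stabilizes to its limit in at most r + 1 steps: W_{r+1} = W_{r+2} = ⋯. -/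
/-!
Put `K_j = (1 ⊗ M(d,F)) · A⁻¹(W_j)`. Since `𝓐` is stable under right multiplication by
`1 ⊗ C`, we have `W_{j+1} = 𝓐 · K_j`, so the Wong sequence stabilizes as soon as `K` does.
Each `K_j` is a `1 ⊗ M(d,F)`-submodule of `F^n ⊗ F^d`, hence of the form `V ⊗ F^d`, so its
dimension is a multiple of `d`. The chain `K_0 ≤ K_1 ≤ ⋯` starts above `ker A`, of dimension
`(n - r) d`, and lives in a space of dimension `n d`, so it cannot grow `r + 1` times in a row.
-/

open Matrix Module Kronecker

namespace Submodule

variable {R M κ : Type*} [DivisionRing R] [AddCommGroup M] [Module R M]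

theorem finrank_add_le_of_lt_of_dvd [FiniteDimensional R M] {K L : Submodule R M} (hKL : K < L)
    {d : ℕ} (hK : d ∣ finrank R K) (hL : d ∣ finrank R L) : finrank R K + d ≤ finrank R L := by
  have hlt := finrank_lt_finrank_of_lt hKL
  have := Nat.le_of_dvd (Nat.sub_pos_of_lt hlt) (Nat.dvd_sub hL hK)
  omega

theorem exists_eq_succ_of_dvd_finrank [FiniteDimensional R M] {K : ℕ → Submodule R M}
    (hK : Monotone K) {d r : ℕ} (hdvd : ∀ i, d ∣ finrank R (K i))
    (hdim : finrank R M < finrank R (K 0) + (r + 1) * d) : ∃ j ≤ r, K j = K (j + 1) := by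
  by_contra! hne
  have hgrow : ∀ i ≤ r + 1, finrank R (K 0) + i * d ≤ finrank R (K i) := by
    intro i hi
    induction i with
    | zero => simp
    | succ i ih =>
      have hstep := finrank_add_le_of_lt_of_dvd
        (lt_of_le_of_ne (hK (by omega : i ≤ i + 1)) (hne i (by omega))) (hdvd i) (hdvd (i + 1))
      have := ih (by omega)
      rw [add_one_mul]
      omega
  have := (K (r + 1)).finrank_le
  have := hgrow (r + 1) le_rfl
  omega

variable [Fintype κ]

theorem finrank_pi_univ_const [FiniteDimensional R M] (V : Submodule R M) :
    finrank R (pi Set.univ fun _ : κ => V) = Fintype.card κ * finrank R V := by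
  have hrange := LinearMap.range_compLeft V.subtype κ
  rw [V.range_subtype] at hrange
  rw [← hrange, LinearMap.finrank_range_of_inj Subtype.val_injective.comp_left,
    finrank_pi_fintype]
  simp

variable [DecidableEq κ]

theorem eq_pi_iSup_map_proj (K : Submodule R (κ → M))
    (hK : ∀ a b, ∀ g ∈ K, Pi.single a (g b) ∈ K) :
    K = pi Set.univ fun _ => ⨆ b, K.map (LinearMap.proj b) := by
  refine le_antisymm (fun g hg a _ => ?_) ?_
  · exact mem_iSup_of_mem a (mem_map_of_mem hg)
  rw [← iSup_map_single]
  refine iSup_le fun a => map_le_iff_le_comap.mpr <| iSup_le fun b => ?_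
  rintro _ ⟨g, hg, rfl⟩
  exact hK a b g hg

theorem card_dvd_finrank_of_single_apply_mem [FiniteDimensional R M] (K : Submodule R (κ → M))
    (hK : ∀ a b, ∀ g ∈ K, Pi.single a (g b) ∈ K) : Fintype.card κ ∣ finrank R K := by
  rw [eq_pi_iSup_map_proj K hK, finrank_pi_univ_const]
  exact dvd_mul_right _ _

end Submodule

section WongSequence

variable {F ι : Type*} [Field F] [Fintype ι]

def imageSpan (𝓐 : Submodule F (Matrix ι ι F)) (S : Submodule F (ι → F)) :
    Submodule F (ι → F) :=
  Submodule.span F {x | ∃ B ∈ 𝓐, ∃ v ∈ S, x = B *ᵥ v}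

theorem imageSpan_mono (𝓐 : Submodule F (Matrix ι ι F)) : Monotone (imageSpan 𝓐) := by
  intro S T hST
  refine Submodule.span_mono ?_
  rintro _ ⟨B, hB, v, hv, rfl⟩
  exact ⟨B, hB, v, hST hv, rfl⟩

variable [DecidableEq ι] (𝓐 : Submodule F (Matrix ι ι F)) (A : Matrix ι ι F)

theorem wongSeq_succ (i : ℕ) :
    wongSeq 𝓐 A (i + 1) = imageSpan 𝓐 ((wongSeq 𝓐 A i).comap A.mulVecLin) :=
  rfl

theorem wongSeq_monotone : Monotone (wongSeq 𝓐 A) := by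
  refine monotone_nat_of_le_succ fun i => ?_
  induction i with
  | zero => exact bot_le
  | succ i ih =>
    rw [wongSeq_succ, wongSeq_succ 𝓐 A (i + 1)]
    exact imageSpan_mono 𝓐 (Submodule.comap_mono ih)

variable {𝓐 A} in
theorem wongSeq_eq_of_succ_eq {i : ℕ} (h : wongSeq 𝓐 A i = wongSeq 𝓐 A (i + 1)) {j : ℕ}
    (hij : i ≤ j) : wongSeq 𝓐 A j = wongSeq 𝓐 A i := by
  induction j, hij using Nat.le_induction with
  | base => rfl
  | succ j _ ih => rw [wongSeq_succ, ih, ← wongSeq_succ, ← h]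

end WongSequence

section Kronecker

variable {F ι κ : Type*} [Field F] [Fintype ι] [DecidableEq ι] [Fintype κ]

theorem mul_one_kronecker_mem_span_kronecker {𝓑 : Set (Matrix ι ι F)}
    {M : Matrix (ι × κ) (ι × κ) F}
    (hM : M ∈ Submodule.span F {M | ∃ B ∈ 𝓑, ∃ C : Matrix κ κ F, M = B ⊗ₖ C})
    (C : Matrix κ κ F) :
    M * ((1 : Matrix ι ι F) ⊗ₖ C) ∈
      Submodule.span F {M | ∃ B ∈ 𝓑, ∃ C : Matrix κ κ F, M = B ⊗ₖ C} := by
  induction hM using Submodule.span_induction with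
  | mem _ hM =>
    obtain ⟨B, hB, C', rfl⟩ := hM
    exact Submodule.subset_span ⟨B, hB, C' * C, by rw [← mul_kronecker_mul, Matrix.mul_one]⟩
  | zero => simp
  | add _ _ _ _ hM hM' => simpa only [add_mul] using add_mem hM hM'
  | smul c _ _ hM => simpa only [smul_mul_assoc] using Submodule.smul_mem _ c hM

def oneKroneckerSpan (S : Submodule F (ι × κ → F)) : Submodule F (ι × κ → F) :=
  Submodule.span F {w | ∃ C : Matrix κ κ F, ∃ v ∈ S, w = (1 : Matrix ι ι F) ⊗ₖ C *ᵥ v}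

theorem oneKroneckerSpan_mono : Monotone (oneKroneckerSpan (F := F) (ι := ι) (κ := κ)) := by
  intro S T hST
  refine Submodule.span_mono ?_
  rintro _ ⟨C, v, hv, rfl⟩
  exact ⟨C, v, hST hv, rfl⟩

theorem one_kronecker_mulVec_mem_oneKroneckerSpan {S : Submodule F (ι × κ → F)}
    (C : Matrix κ κ F) {v : ι × κ → F} (hv : v ∈ oneKroneckerSpan S) :
    (1 : Matrix ι ι F) ⊗ₖ C *ᵥ v ∈ oneKroneckerSpan S := by
  suffices oneKroneckerSpan S ≤ (oneKroneckerSpan S).comap ((1 : Matrix ι ι F) ⊗ₖ C).mulVecLin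
    from this hv
  refine Submodule.span_le.mpr ?_
  rintro _ ⟨C', w, hw, rfl⟩
  refine Submodule.subset_span ⟨C * C', w, hw, ?_⟩
  rw [mulVecLin_apply, mulVec_mulVec, ← mul_kronecker_mul, Matrix.one_mul]

variable [DecidableEq κ]

theorem le_oneKroneckerSpan (S : Submodule F (ι × κ → F)) : S ≤ oneKroneckerSpan S :=
  fun v hv => Submodule.subset_span ⟨1, v, hv, by rw [one_kronecker_one, one_mulVec]⟩

theorem imageSpan_oneKroneckerSpan {𝓐 : Submodule F (Matrix (ι × κ) (ι × κ) F)}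
    (h𝓐 : ∀ M ∈ 𝓐, ∀ C : Matrix κ κ F, M * ((1 : Matrix ι ι F) ⊗ₖ C) ∈ 𝓐)
    (S : Submodule F (ι × κ → F)) : imageSpan 𝓐 (oneKroneckerSpan S) = imageSpan 𝓐 S := by
  refine le_antisymm (Submodule.span_le.mpr ?_) (imageSpan_mono 𝓐 (le_oneKroneckerSpan S))
  rintro _ ⟨B, hB, w, hw, rfl⟩
  suffices oneKroneckerSpan S ≤ (imageSpan 𝓐 S).comap B.mulVecLin from this hw
  refine Submodule.span_le.mpr ?_
  rintro _ ⟨C, v, hv, rfl⟩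
  refine Submodule.subset_span ⟨B * ((1 : Matrix ι ι F) ⊗ₖ C), h𝓐 B hB C, v, hv, ?_⟩
  rw [mulVecLin_apply, mulVec_mulVec]

theorem one_kronecker_single_mulVec_apply (a b : κ) (v : ι × κ → F) (i : ι) (k : κ) :
    ((1 : Matrix ι ι F) ⊗ₖ single a b 1 *ᵥ v) (i, k) = if k = a then v (i, b) else 0 := by
  simp [mulVec, dotProduct, Fintype.sum_prod_type, one_apply, single_apply, ite_and, eq_comm]

theorem card_dvd_finrank_of_one_kronecker_mulVec_mem (K : Submodule F (ι × κ → F))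
    (hK : ∀ C : Matrix κ κ F, ∀ v ∈ K, (1 : Matrix ι ι F) ⊗ₖ C *ᵥ v ∈ K) :
    Fintype.card κ ∣ finrank F K := by
  -- `Φ v a i = v (i, a)`; under `Φ`, `1 ⊗ single a b 1` becomes `g ↦ Pi.single a (g b)`.
  let Φ := (LinearEquiv.funCongrLeft F F (Equiv.prodComm κ ι)).trans (LinearEquiv.curry F F κ ι)
  rw [← Φ.finrank_map_eq]
  refine Submodule.card_dvd_finrank_of_single_apply_mem _ ?_
  rintro a b _ ⟨v, hv, rfl⟩
  refine ⟨_, hK (single a b 1) v hv, ?_⟩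
  ext k i
  by_cases hk : k = a <;> simp [Φ, hk, one_kronecker_single_mulVec_apply]

theorem card_dvd_finrank_oneKroneckerSpan (S : Submodule F (ι × κ → F)) :
    Fintype.card κ ∣ finrank F (oneKroneckerSpan S) :=
  card_dvd_finrank_of_one_kronecker_mulVec_mem _
    fun C _ hv => one_kronecker_mulVec_mem_oneKroneckerSpan C hv

end Kronecker

theorem stmt17_general {F : Type*} [Field F] {n d r : ℕ} (hd : 0 < d)
    (𝓑 : Submodule F (Matrix (Fin n) (Fin n) F))
    (𝓐 : Submodule F (Matrix (Fin n × Fin d) (Fin n × Fin d) F))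
    (h𝓐 : 𝓐 = Submodule.span F
      {M : Matrix (Fin n × Fin d) (Fin n × Fin d) F |
        ∃ B ∈ 𝓑, ∃ C : Matrix (Fin d) (Fin d) F, M = B ⊗ₖ C})
    (A : Matrix (Fin n × Fin d) (Fin n × Fin d) F)
    (hrk : A.rank = r * d) :
    ∀ j : ℕ, r + 1 ≤ j → wongSeq 𝓐 A j = wongSeq 𝓐 A (r + 1) := by
  set K : ℕ → Submodule F (Fin n × Fin d → F) :=
    fun i => oneKroneckerSpan ((wongSeq 𝓐 A i).comap A.mulVecLin)
  have hW (i : ℕ) : wongSeq 𝓐 A (i + 1) = imageSpan 𝓐 (K i) := by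
    rw [wongSeq_succ]
    refine (imageSpan_oneKroneckerSpan (fun M hM C => ?_) _).symm
    subst h𝓐
    exact mul_one_kronecker_mem_span_kronecker hM C
  have hK : Monotone K :=
    oneKroneckerSpan_mono.comp fun i j hij => Submodule.comap_mono (wongSeq_monotone 𝓐 A hij)
  have hdvd (i : ℕ) : d ∣ finrank F (K i) := by
    simpa using card_dvd_finrank_oneKroneckerSpan ((wongSeq 𝓐 A i).comap A.mulVecLin)
  have hdim : finrank F (Fin n × Fin d → F) < finrank F (K 0) + (r + 1) * d := by
    have hker : finrank F (LinearMap.ker A.mulVecLin) ≤ finrank F (K 0) :=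
      Submodule.finrank_mono (le_oneKroneckerSpan _)
    have hrank := A.mulVecLin.finrank_range_add_finrank_ker
    rw [← Matrix.rank, hrk] at hrank
    simp only [finrank_fintype_fun_eq_card, Fintype.card_prod, Fintype.card_fin] at hrank ⊢
    linarith
  obtain ⟨j, hjr, hj⟩ := Submodule.exists_eq_succ_of_dvd_finrank hK hdvd hdim
  have hstab : wongSeq 𝓐 A (j + 1) = wongSeq 𝓐 A (j + 1 + 1) := by rw [hW, hW, hj]
  intro i hi
  exact (wongSeq_eq_of_succ_eq hstab (by omega)).trans (wongSeq_eq_of_succ_eq hstab (by omega)).symm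

/-- For a blow-up `𝓐 = 𝓑 ⊗ M(d,F)` and `A ∈ 𝓐` of rank `rd`, the second Wong
sequence of `(A, 𝓐)` stabilizes within `r + 1` steps. -/
theorem stmt17 {F : Type*} [Field F] {n d r : ℕ} (hd : 0 < d)
    (𝓑 : Submodule F (Matrix (Fin n) (Fin n) F))
    (𝓐 : Submodule F (Matrix (Fin n × Fin d) (Fin n × Fin d) F))
    (h𝓐 : 𝓐 = Submodule.span F
      {M : Matrix (Fin n × Fin d) (Fin n × Fin d) F |
        ∃ B ∈ 𝓑, ∃ C : Matrix (Fin d) (Fin d) F, M = B ⊗ₖ C})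
    (A : Matrix (Fin n × Fin d) (Fin n × Fin d) F) (hA : A ∈ 𝓐)
    (hrk : A.rank = r * d) :
    ∀ j : ℕ, r + 1 ≤ j → wongSeq 𝓐 A j = wongSeq 𝓐 A (r + 1) :=
  stmt17_general hd 𝓑 𝓐 h𝓐 A hrk
end
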